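/- arXiv:0906.1141 — 6 statements merged into one kernel-verified Lean document; each statement's English description precedes it below -/
import Mathlib

section
/- Let X₁,…,Xₙ be independent Poisson random variables with parameters λ₁,…,λₙ, and Y_i = Σⱼ a_{ij} Xⱼ with a_{ij} nonnegative integers. Then the r-th conditional factorial moment E[Xⱼ!/(Xⱼ-r)! | Y = b] equals λⱼʳ · F₀(b₁ - r a_{1j}, …, b_m - r a_{mj}) / F₀(b₁,…,b_m) when F₀(b) > 0 and all b_i - r a_{ij} ≥ 0, and zero if some b_i - r a_{ij} < 0. -/
open MeasureTheory ProbabilityTheory Real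
open scoped BigOperators

/-- `F₀(b) = Σ_{k ∈ ℕⁿ, A·k = b} ∏ⱼ λⱼ^{kⱼ}/kⱼ!` (empty sum gives 0). -/
noncomputable def F0 {m n : ℕ} (A : Fin m → Fin n → ℕ) (lam : Fin n → ℝ)
    (b : Fin m → ℕ) : ℝ :=
  ∑' k : Fin n → ℕ,
    if ∀ i, ∑ j, A i j * k j = b i then ∏ j, lam j ^ k j / (Nat.factorial (k j)) else 0

/-! Under independence the vector `V = (X₁, …, Xₙ)` has law `P(V = k) = c · w(k)` with
`w(k) = ∏ⱼ λⱼ^{kⱼ}/kⱼ!` and `c = e^{-Σλⱼ} > 0`, so conditioning on `V ∈ S = {k | A k = b}` gives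
`E[(Xⱼ)ᵣ | V ∈ S] = Σ_{k∈S} (kⱼ)ᵣ w(k) / Σ_{k∈S} w(k)`. Since
`(m+r)ᵣ λ^{m+r}/(m+r)! = λ^r · λ^m/m!`, the shift `k = k' + r eⱼ` turns the numerator into
`λⱼ^r Σ w(k')` over `A k' + r A_{·j} = b`: this is `λⱼ^r F₀(b - r A_{·j})` when `r A_{·j} ≤ b`
and an empty sum otherwise. -/

open Finset

section PoissonWeight

variable {ι : Type*} [Fintype ι]

noncomputable def poissonWeight (lam : ι → ℝ) (k : ι → ℕ) : ℝ :=
  ∏ j, lam j ^ k j / (k j).factorial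

lemma poissonWeight_nonneg {lam : ι → ℝ} (hlam : ∀ j, 0 ≤ lam j) (k : ι → ℕ) :
    0 ≤ poissonWeight lam k :=
  prod_nonneg fun j _ => div_nonneg (pow_nonneg (hlam j) _) (Nat.cast_nonneg _)

lemma descFactorial_mul_pow_div_factorial (x : ℝ) (m r : ℕ) :
    ((m + r).descFactorial r : ℝ) * (x ^ (m + r) / (m + r).factorial) =
      x ^ r * (x ^ m / m.factorial) := by
  have hfac : (m.factorial : ℝ) * (m + r).descFactorial r = (m + r).factorial := by
    exact_mod_cast (m.add_sub_cancel r ▸ Nat.factorial_mul_descFactorial (Nat.le_add_left r m))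
  rw [← hfac, pow_add]
  field_simp

lemma descFactorial_mul_poissonWeight_add_single [DecidableEq ι] (lam : ι → ℝ) (k : ι → ℕ)
    (j : ι) (r : ℕ) :
    ((k j + r).descFactorial r : ℝ) * poissonWeight lam (k + Pi.single j r) =
      lam j ^ r * poissonWeight lam k := by
  simp only [poissonWeight, ← mul_prod_erase univ _ (mem_univ j), Pi.add_apply,
    Pi.single_eq_same]
  rw [prod_congr rfl fun l hl => by rw [Pi.single_eq_of_ne (ne_of_mem_erase hl), add_zero],
    ← mul_assoc, descFactorial_mul_pow_div_factorial, mul_assoc]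

lemma tsum_indicator_descFactorial_mul_poissonWeight [DecidableEq ι] {lam : ι → ℝ} {j : ι}
    (hlam : 0 ≤ lam j) (r : ℕ) (S : Set (ι → ℕ)) :
    ∑' k, S.indicator (fun k => ENNReal.ofReal ((k j).descFactorial r * poissonWeight lam k)) k =
      ENNReal.ofReal (lam j ^ r) *
        ∑' k, ((fun k : ι → ℕ => k + Pi.single j r) ⁻¹' S).indicator
          (fun k => ENNReal.ofReal (poissonWeight lam k)) k := by
  have hsupp : (Function.support fun k => S.indicator
      (fun k => ENNReal.ofReal ((k j).descFactorial r * poissonWeight lam k)) k) ⊆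
        Set.range fun k : ι → ℕ => k + Pi.single j r := by
    intro k hk
    have hr : r ≤ k j := by
      by_contra h
      simp [Nat.descFactorial_eq_zero_iff_lt.2 (not_le.1 h)] at hk
    refine ⟨k - Pi.single j r, tsub_add_cancel_of_le fun l => ?_⟩
    rcases eq_or_ne l j with rfl | h
    · simpa using hr
    · simp [Pi.single_eq_of_ne h]
  rw [← ENNReal.tsum_mul_left, ← (add_left_injective (Pi.single j r)).tsum_eq hsupp]
  refine tsum_congr fun k => ?_
  by_cases hk : k + Pi.single j r ∈ S
  · rw [Set.indicator_of_mem hk, Set.indicator_of_mem (show k ∈ _ from hk), Pi.add_apply,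
      Pi.single_eq_same, descFactorial_mul_poissonWeight_add_single,
      ENNReal.ofReal_mul (pow_nonneg hlam r)]
  · rw [Set.indicator_of_notMem hk, Set.indicator_of_notMem (show k ∉ _ from hk), mul_zero]

end PoissonWeight

section SolutionSet

variable {m n : ℕ} (A : Fin m → Fin n → ℕ)

def solutionSet (b : Fin m → ℕ) : Set (Fin n → ℕ) :=
  {k | ∀ i, ∑ l, A i l * k l = b i}

lemma add_single_mem_solutionSet_iff (b : Fin m → ℕ) (k : Fin n → ℕ) (j : Fin n) (r : ℕ) :
    k + Pi.single j r ∈ solutionSet A b ↔ ∀ i, ∑ l, A i l * k l + r * A i j = b i := by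
  simp [solutionSet, mul_add, sum_add_distrib, Pi.single_apply, mul_comm]

lemma preimage_add_single_solutionSet {b : Fin m → ℕ} {j : Fin n} {r : ℕ}
    (hle : ∀ i, r * A i j ≤ b i) :
    (fun k : Fin n → ℕ => k + Pi.single j r) ⁻¹' solutionSet A b =
      solutionSet A (fun i => b i - r * A i j) := by
  ext k
  rw [Set.mem_preimage, add_single_mem_solutionSet_iff]
  exact forall_congr' fun i => by have := hle i; beta_reduce; omega

lemma preimage_add_single_solutionSet_eq_empty {b : Fin m → ℕ} {j : Fin n} {r : ℕ}
    (hlt : ∃ i, b i < r * A i j) :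
    (fun k : Fin n → ℕ => k + Pi.single j r) ⁻¹' solutionSet A b = ∅ := by
  obtain ⟨i, hi⟩ := hlt
  refine Set.eq_empty_of_forall_notMem fun k hk => ?_
  have := (add_single_mem_solutionSet_iff A b k j r).1 hk i
  omega

lemma F0_eq_toReal_tsum_indicator {lam : Fin n → ℝ} (hlam : ∀ j, 0 ≤ lam j)
    (hsum : Summable (poissonWeight lam)) (b : Fin m → ℕ) :
    F0 A lam b = (∑' k, (solutionSet A b).indicator
      (fun k => ENNReal.ofReal (poissonWeight lam k)) k).toReal := by
  have hF0 : F0 A lam b = ∑' k, (solutionSet A b).indicator (poissonWeight lam) k := by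
    simp [F0, Set.indicator_apply, solutionSet, poissonWeight]
  have hnonneg := Set.indicator_nonneg (s := solutionSet A b) fun k _ =>
    poissonWeight_nonneg hlam k
  rw [hF0, ← ENNReal.toReal_ofReal (tsum_nonneg hnonneg),
    ENNReal.ofReal_tsum_of_nonneg hnonneg (hsum.indicator _)]
  exact congrArg _ <| tsum_congr fun k =>
    (congrFun (Set.indicator_comp_of_zero ENNReal.ofReal_zero) k).symm

end SolutionSet

section DiscreteLaw

variable {Ω α : Type*} [MeasurableSpace Ω] {μ : Measure Ω}
  [MeasurableSpace α] [Countable α] [MeasurableSingletonClass α] {V : Ω → α}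

lemma ProbabilityTheory.iIndepFun.measure_pi_preimage_singleton {ι : Type*} [Fintype ι]
    {β : ι → Type*} [∀ i, MeasurableSpace (β i)] [∀ i, MeasurableSingletonClass (β i)]
    {X : ∀ i, Ω → β i} (h : iIndepFun X μ) (k : ∀ i, β i) :
    μ ((fun ω i => X i ω) ⁻¹' {k}) = ∏ i, μ (X i ⁻¹' {k i}) := by
  have hcap : (fun ω i => X i ω) ⁻¹' {k} = ⋂ i, X i ⁻¹' {k i} := by
    ext ω
    simp [funext_iff]
  rw [hcap, h.meas_iInter fun i => ⟨{k i}, measurableSet_singleton _, rfl⟩]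

lemma summable_toReal_measure_preimage_singleton [IsFiniteMeasure μ] (hV : Measurable V) :
    Summable fun a => (μ (V ⁻¹' {a})).toReal := by
  refine ENNReal.summable_toReal ?_
  rw [← tsum_univ, tsum_measure_preimage_singleton Set.countable_univ
    fun a _ => hV (measurableSet_singleton a)]
  exact measure_ne_top μ _

lemma setLIntegral_preimage_eq_tsum (hV : Measurable V) (f : α → ENNReal) (S : Set α) :
    ∫⁻ ω in V ⁻¹' S, f (V ω) ∂μ = ∑' a, S.indicator (fun a => f a * μ (V ⁻¹' {a})) a := by
  rw [← setLIntegral_map S.to_countable.measurableSet (measurable_of_countable f) hV,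
    lintegral_countable']
  refine tsum_congr fun a => ?_
  rw [Measure.restrict_apply (measurableSet_singleton a)]
  by_cases ha : a ∈ S
  · rw [Set.indicator_of_mem ha, Set.singleton_inter_of_mem ha,
      Measure.map_apply hV (measurableSet_singleton a)]
  · rw [Set.indicator_of_notMem ha, Set.singleton_inter_of_notMem ha, measure_empty, mul_zero]

/-- Sums are taken in `ℝ≥0∞`, so no summability hypothesis is needed. -/
lemma integral_cond_preimage_eq_div (hV : Measurable V) {c : ℝ} (hc : 0 < c) {w : α → ℝ}
    (hlaw : ∀ a, μ (V ⁻¹' {a}) = ENNReal.ofReal (c * w a)) {g : α → ℝ} (hg : 0 ≤ g)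
    (S : Set α) :
    ∫ ω, g (V ω) ∂μ[|V ⁻¹' S] =
      (∑' a, S.indicator (fun a => ENNReal.ofReal (g a * w a)) a).toReal /
        (∑' a, S.indicator (fun a => ENNReal.ofReal (w a)) a).toReal := by
  have hweighted : ∀ f : α → ℝ, 0 ≤ f → ∫⁻ ω in V ⁻¹' S, ENNReal.ofReal (f (V ω)) ∂μ =
      ENNReal.ofReal c * ∑' a, S.indicator (fun a => ENNReal.ofReal (f a * w a)) a := by
    intro f hf
    rw [setLIntegral_preimage_eq_tsum hV (fun a => ENNReal.ofReal (f a)),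
      ← ENNReal.tsum_mul_left]
    refine tsum_congr fun a => ?_
    by_cases ha : a ∈ S
    · rw [Set.indicator_of_mem ha, Set.indicator_of_mem ha, hlaw, ← ENNReal.ofReal_mul (hf a),
        ← ENNReal.ofReal_mul hc.le]
      ring_nf
    · rw [Set.indicator_of_notMem ha, Set.indicator_of_notMem ha, mul_zero]
  have hmass : μ (V ⁻¹' S) =
      ENNReal.ofReal c * ∑' a, S.indicator (fun a => ENNReal.ofReal (w a)) a := by
    simpa using hweighted 1 zero_le_one
  rw [ProbabilityTheory.cond, integral_smul_measure,
    integral_eq_lintegral_of_nonneg_ae (ae_of_all _ fun ω => hg (V ω))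
      ((measurable_of_countable g).comp hV).aestronglyMeasurable,
    hweighted g hg, hmass, smul_eq_mul, ENNReal.toReal_inv, ENNReal.toReal_mul,
    ENNReal.toReal_mul, ENNReal.toReal_ofReal hc.le, inv_mul_eq_div, mul_div_mul_left _ _ hc.ne']

end DiscreteLaw

lemma measure_preimage_singleton_eq_poissonWeight {ι : Type*} [Fintype ι] {Ω : Type*}
    [MeasurableSpace Ω] {μ : Measure Ω} {lam : ι → ℝ} (hlam : ∀ j, 0 ≤ lam j)
    {X : ι → Ω → ℕ} (hindep : iIndepFun X μ)
    (hX : ∀ j k, μ (X j ⁻¹' {k}) =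
      ENNReal.ofReal (Real.exp (-lam j) * lam j ^ k / Nat.factorial k))
    (k : ι → ℕ) :
    μ ((fun ω j => X j ω) ⁻¹' {k}) =
      ENNReal.ofReal ((∏ j, Real.exp (-lam j)) * poissonWeight lam k) := by
  rw [hindep.measure_pi_preimage_singleton, poissonWeight, ← prod_mul_distrib,
    ENNReal.ofReal_prod_of_nonneg fun j _ => by have := hlam j; positivity]
  simp_rw [hX, mul_div_assoc]

theorem conditional_factorial_moment_general
    {Ω : Type*} [MeasurableSpace Ω] (μ : Measure Ω) [IsProbabilityMeasure μ]
    {m n : ℕ} (A : Fin m → Fin n → ℕ) (lam : Fin n → ℝ) (hlam : ∀ j, 0 < lam j)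
    (X : Fin n → Ω → ℕ) (hXm : ∀ j, Measurable (X j))
    (hindep : iIndepFun X μ)
    (hX : ∀ j k, μ (X j ⁻¹' {k}) =
      ENNReal.ofReal (Real.exp (-lam j) * lam j ^ k / Nat.factorial k))
    (b : Fin m → ℕ) (r : ℕ) (j : Fin n) :
    ((∀ i, r * A i j ≤ b i) →
      ∫ ω, ((X j ω).descFactorial r : ℝ)
          ∂(μ[|{ω | ∀ i, ∑ j', A i j' * X j' ω = b i}]) =
        lam j ^ r * F0 A lam (fun i => b i - r * A i j) / F0 A lam b) ∧
    ((∃ i, b i < r * A i j) →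
      ∫ ω, ((X j ω).descFactorial r : ℝ)
          ∂(μ[|{ω | ∀ i, ∑ j', A i j' * X j' ω = b i}]) = 0) := by
  set V : Ω → Fin n → ℕ := fun ω j => X j ω
  have hV : Measurable V := measurable_pi_lambda _ hXm
  have hlam₀ : ∀ j, 0 ≤ lam j := fun j => (hlam j).le
  have hc : 0 < ∏ j, Real.exp (-lam j) := prod_pos fun j _ => Real.exp_pos _
  have hlaw := measure_preimage_singleton_eq_poissonWeight hlam₀ hindep hX
  -- up to the constant `∏ j, exp (-lam j)`, the weights are the masses of the law of `V`
  have hsum : Summable (poissonWeight lam) :=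
    (summable_mul_left_iff hc.ne').1 <| (summable_toReal_measure_preimage_singleton hV).congr
      fun k => by
        rw [hlaw, ENNReal.toReal_ofReal (mul_nonneg hc.le (poissonWeight_nonneg hlam₀ k))]
  have hmoment : ∫ ω, ((X j ω).descFactorial r : ℝ) ∂μ[|V ⁻¹' solutionSet A b] =
      lam j ^ r * (∑' k, ((fun k => k + Pi.single j r) ⁻¹' solutionSet A b).indicator
        (fun k => ENNReal.ofReal (poissonWeight lam k)) k).toReal / F0 A lam b := by
    rw [integral_cond_preimage_eq_div hV hc hlaw (g := fun k => ((k j).descFactorial r : ℝ))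
      (fun _ => Nat.cast_nonneg _), tsum_indicator_descFactorial_mul_poissonWeight (hlam₀ j),
      ENNReal.toReal_mul, ENNReal.toReal_ofReal (pow_nonneg (hlam₀ j) r),
      ← F0_eq_toReal_tsum_indicator A hlam₀ hsum]
  have hE : {ω | ∀ i, ∑ j', A i j' * X j' ω = b i} = V ⁻¹' solutionSet A b := rfl
  rw [hE, hmoment]
  refine ⟨fun hle => ?_, fun hlt => ?_⟩
  · rw [preimage_add_single_solutionSet A hle, ← F0_eq_toReal_tsum_indicator A hlam₀ hsum]
  · rw [preimage_add_single_solutionSet_eq_empty A hlt]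
    simp

/-- Conditional factorial moments of independent Poisson variables given `A·X = b`:
`E[Xⱼ!/(Xⱼ-r)! | Y = b] = λⱼʳ F₀(b - r A_{·j}) / F₀(b)` when all `bᵢ - r aᵢⱼ ≥ 0`,
and `0` if some `bᵢ - r aᵢⱼ < 0`. -/
theorem conditional_factorial_moment
    {Ω : Type*} [MeasurableSpace Ω] (μ : Measure Ω) [IsProbabilityMeasure μ]
    {m n : ℕ} (A : Fin m → Fin n → ℕ) (lam : Fin n → ℝ) (hlam : ∀ j, 0 < lam j)
    (X : Fin n → Ω → ℕ) (hXm : ∀ j, Measurable (X j))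
    (hindep : iIndepFun X μ)
    (hX : ∀ j k, μ (X j ⁻¹' {k}) =
      ENNReal.ofReal (Real.exp (-lam j) * lam j ^ k / Nat.factorial k))
    (b : Fin m → ℕ) (r : ℕ) (hr : 0 < r) (j : Fin n)
    (hpos : 0 < μ {ω | ∀ i, ∑ j', A i j' * X j' ω = b i})
    (hF0 : 0 < F0 A lam b) :
    ((∀ i, r * A i j ≤ b i) →
      ∫ ω, ((X j ω).descFactorial r : ℝ)
          ∂(μ[|{ω | ∀ i, ∑ j', A i j' * X j' ω = b i}]) =
        lam j ^ r * F0 A lam (fun i => b i - r * A i j) / F0 A lam b) ∧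
    ((∃ i, b i < r * A i j) →
      ∫ ω, ((X j ω).descFactorial r : ℝ)
          ∂(μ[|{ω | ∀ i, ∑ j', A i j' * X j' ω = b i}]) = 0) :=
  conditional_factorial_moment_general μ A lam hlam X hXm hindep hX b r j
end

section
/- Let A be the 2×n matrix with entries in {0,1}, and set c₀₁ = Σ{λⱼ : a_{1j}=0, a_{2j}=1}, c₁₀ = Σ{λⱼ : a_{1j}=1, a_{2j}=0}, c₁₁ = Σ{λⱼ : a_{1j}=1, a_{2j}=1} (assume no column is zero). Then F₀(b₁,b₂) = Σ_{k=0}^{min(b₁,b₂)} c₁₁ᵏ c₀₁^{b₁-k} c₁₀^{b₂-k} / (k! (b₁-k)! (b₂-k)!). -/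
open scoped BigOperators

open Finset in
lemma sum_prod_piAntidiag {ι : Type*} [DecidableEq ι] (s : Finset ι) (f : ι → ℝ) (N : ℕ) :
    ∑ k ∈ s.piAntidiag N, ∏ j ∈ s, f j ^ k j / (Nat.factorial (k j)) =
      (∑ j ∈ s, f j) ^ N / Nat.factorial N := by
  rw [Finset.sum_pow_eq_sum_piAntidiag, Finset.sum_div]
  refine Finset.sum_congr rfl fun k hk => ?_
  rw [Finset.mem_piAntidiag] at hk
  have hfac : (∏ j ∈ s, (Nat.factorial (k j) : ℝ)) * (Nat.multinomial s k : ℝ)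
      = (Nat.factorial N : ℝ) := by
    have h := Nat.multinomial_spec s k
    rw [hk.1] at h
    exact_mod_cast h
  have h1 : (∏ j ∈ s, (Nat.factorial (k j) : ℝ)) ≠ 0 := by positivity
  have h2 : (Nat.factorial N : ℝ) ≠ 0 := by positivity
  rw [Finset.prod_div_distrib, div_eq_div_iff h1 h2, ← hfac]
  ring

lemma sum_prod_mul {α β γ : Type*} [DecidableEq α] [DecidableEq β] [DecidableEq γ]
    (A : Finset α) (B : Finset β) (C : Finset γ) (f : α → ℝ) (g : β → ℝ) (h : γ → ℝ) :
    ∑ p ∈ A ×ˢ (B ×ˢ C), f p.1 * (g p.2.1 * h p.2.2) =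
      (∑ a ∈ A, f a) * ((∑ b ∈ B, g b) * (∑ c ∈ C, h c)) := by
  simp only [Finset.sum_product]
  rw [Finset.sum_mul_sum B C g h, Finset.sum_mul_sum]
  simp only [Finset.mul_sum]

/-- For a two-rowed `{0,1}` matrix `A` with no zero column, `F₀(b₁,b₂)` is the single
hypergeometric sum `Σ_{k=0}^{min(b₁,b₂)} c₁₁ᵏ c₁₀^{b₁-k} c₀₁^{b₂-k} / (k!(b₁-k)!(b₂-k)!)`,
where `c₀₁` (resp. `c₁₀`, `c₁₁`) is the sum of the `λⱼ` over the columns `(a₁ⱼ,a₂ⱼ)`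
equal to `(0,1)` (resp. `(1,0)`, `(1,1)`). -/
theorem tworow_single_sum {n : ℕ} (A : Fin 2 → Fin n → ℕ)
    (hA : ∀ i j, A i j ≤ 1) (hcol : ∀ j, ¬(A 0 j = 0 ∧ A 1 j = 0))
    (lam : Fin n → ℝ) (hlam : ∀ j, 0 < lam j) (b₁ b₂ : ℕ) :
    let c01 : ℝ := ∑ j ∈ Finset.univ.filter (fun j => A 0 j = 0 ∧ A 1 j = 1), lam j
    let c10 : ℝ := ∑ j ∈ Finset.univ.filter (fun j => A 0 j = 1 ∧ A 1 j = 0), lam j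
    let c11 : ℝ := ∑ j ∈ Finset.univ.filter (fun j => A 0 j = 1 ∧ A 1 j = 1), lam j
    F0 A lam ![b₁, b₂] =
      ∑ k ∈ Finset.range (min b₁ b₂ + 1),
        c11 ^ k * c10 ^ (b₁ - k) * c01 ^ (b₂ - k) /
          (Nat.factorial k * Nat.factorial (b₁ - k) * Nat.factorial (b₂ - k)) := by
  classical
  intro c01 c10 c11
  set S01 : Finset (Fin n) := Finset.univ.filter (fun j => A 0 j = 0 ∧ A 1 j = 1) with hS01
  set S10 : Finset (Fin n) := Finset.univ.filter (fun j => A 0 j = 1 ∧ A 1 j = 0) with hS10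
  set S11 : Finset (Fin n) := Finset.univ.filter (fun j => A 0 j = 1 ∧ A 1 j = 1) with hS11
  have hm01 : ∀ j, j ∈ S01 ↔ A 0 j = 0 ∧ A 1 j = 1 := by
    intro j; simp [hS01]
  have hm10 : ∀ j, j ∈ S10 ↔ A 0 j = 1 ∧ A 1 j = 0 := by
    intro j; simp [hS10]
  have hm11 : ∀ j, j ∈ S11 ↔ A 0 j = 1 ∧ A 1 j = 1 := by
    intro j; simp [hS11]
  -- basic disjointness facts
  have hd1 : Disjoint S10 S11 := by
    rw [Finset.disjoint_left]
    intro j h1 h2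
    rw [hm10] at h1; rw [hm11] at h2; omega
  have hd0 : Disjoint S01 S11 := by
    rw [Finset.disjoint_left]
    intro j h1 h2
    rw [hm01] at h1; rw [hm11] at h2; omega
  have hd2 : Disjoint S11 (S10 ∪ S01) := by
    rw [Finset.disjoint_left]
    intro j h1 h2
    rw [hm11] at h1
    rcases Finset.mem_union.1 h2 with h | h
    · rw [hm10] at h; omega
    · rw [hm01] at h; omega
  have hd3 : Disjoint S10 S01 := by
    rw [Finset.disjoint_left]
    intro j h1 h2
    rw [hm10] at h1; rw [hm01] at h2; omega
  have hcover : S11 ∪ (S10 ∪ S01) = Finset.univ := by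
    ext j
    have h0 := hA 0 j; have h1 := hA 1 j; have hc := hcol j
    simp only [Finset.mem_union, hm01 j, hm10 j, hm11 j, Finset.mem_univ, iff_true]
    omega
  -- row sums
  have hA0 : ∀ j, j ∈ S10 ∪ S11 ↔ A 0 j = 1 := by
    intro j
    have h0 := hA 0 j; have h1 := hA 1 j; have hc := hcol j
    rw [Finset.mem_union, hm10, hm11]; omega
  have hA1 : ∀ j, j ∈ S01 ∪ S11 ↔ A 1 j = 1 := by
    intro j
    have h0 := hA 0 j; have h1 := hA 1 j; have hc := hcol j
    rw [Finset.mem_union, hm01, hm11]; omega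
  have hrow0 : ∀ k : Fin n → ℕ, ∑ j, A 0 j * k j = ∑ j ∈ S10, k j + ∑ j ∈ S11, k j := by
    intro k
    rw [← Finset.sum_union hd1]
    rw [← Finset.sum_subset (Finset.subset_univ (S10 ∪ S11)) (fun j _ hj => by
      have h0 := hA 0 j
      have hz : A 0 j = 0 := by
        by_contra h
        exact hj ((hA0 j).mpr (by omega))
      simp [hz])]
    exact Finset.sum_congr rfl fun j hj => by rw [(hA0 j).mp hj, one_mul]
  have hrow1 : ∀ k : Fin n → ℕ, ∑ j, A 1 j * k j = ∑ j ∈ S01, k j + ∑ j ∈ S11, k j := by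
    intro k
    rw [← Finset.sum_union hd0]
    rw [← Finset.sum_subset (Finset.subset_univ (S01 ∪ S11)) (fun j _ hj => by
      have h1 := hA 1 j
      have hz : A 1 j = 0 := by
        by_contra h
        exact hj ((hA1 j).mpr (by omega))
      simp [hz])]
    exact Finset.sum_congr rfl fun j hj => by rw [(hA1 j).mp hj, one_mul]
  -- condition in terms of the partition
  have hiff : ∀ k : Fin n → ℕ,
      (∀ i, ∑ j, A i j * k j = ![b₁, b₂] i) ↔
        (∑ j ∈ S10, k j + ∑ j ∈ S11, k j = b₁ ∧ ∑ j ∈ S01, k j + ∑ j ∈ S11, k j = b₂) := by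
    intro k
    rw [Fin.forall_fin_two]
    rw [hrow0 k, hrow1 k]
    simp
  -- step 1 : tsum to finite filtered sum
  set B : Finset (Fin n → ℕ) := Fintype.piFinset fun _ : Fin n => Finset.range (b₁ + b₂ + 1)
    with hB
  have hstep1 : F0 A lam ![b₁, b₂] =
      ∑ k ∈ B.filter (fun k => ∀ i, ∑ j, A i j * k j = ![b₁, b₂] i),
        ∏ j, lam j ^ k j / (Nat.factorial (k j)) := by
    rw [F0, tsum_eq_sum (s := B) ?_, Finset.sum_filter]
    intro k hk
    rw [if_neg]
    intro hcond
    rw [hB, Fintype.mem_piFinset] at hk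
    push_neg at hk
    obtain ⟨j, hj⟩ := hk
    rw [Finset.mem_range, not_lt] at hj
    have h0 := hcond 0
    have h1 := hcond 1
    simp only [Matrix.cons_val_zero, Matrix.cons_val_one, Matrix.head_cons] at h0 h1
    have hle0 : A 0 j * k j ≤ ∑ j', A 0 j' * k j' :=
      Finset.single_le_sum (f := fun j' => A 0 j' * k j') (fun _ _ => Nat.zero_le _)
        (Finset.mem_univ j)
    have hle1 : A 1 j * k j ≤ ∑ j', A 1 j' * k j' :=
      Finset.single_le_sum (f := fun j' => A 1 j' * k j') (fun _ _ => Nat.zero_le _)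
        (Finset.mem_univ j)
    have hc := hcol j
    have ha0 := hA 0 j; have ha1 := hA 1 j
    -- one of the rows has a 1 in column j
    interval_cases h : A 0 j <;> interval_cases h' : A 1 j <;> omega
  rw [hstep1]
  -- step 2 : reindex by the sigma type
  set T : Finset ((_ : ℕ) × ((Fin n → ℕ) × ((Fin n → ℕ) × (Fin n → ℕ)))) :=
    (Finset.range (min b₁ b₂ + 1)).sigma
      (fun t => (S11.piAntidiag t) ×ˢ ((S10.piAntidiag (b₁ - t)) ×ˢ (S01.piAntidiag (b₂ - t))))
    with hT
  have hstep2 : ∑ k ∈ B.filter (fun k => ∀ i, ∑ j, A i j * k j = ![b₁, b₂] i),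
        ∏ j, lam j ^ k j / (Nat.factorial (k j)) =
      ∑ p ∈ T, (∏ j ∈ S11, lam j ^ p.2.1 j / (Nat.factorial (p.2.1 j))) *
        ((∏ j ∈ S10, lam j ^ p.2.2.1 j / (Nat.factorial (p.2.2.1 j))) *
         (∏ j ∈ S01, lam j ^ p.2.2.2 j / (Nat.factorial (p.2.2.2 j)))) := by
    apply Finset.sum_nbij'
      (i := fun k => ⟨∑ j ∈ S11, k j,
        (fun j => if j ∈ S11 then k j else 0,
         (fun j => if j ∈ S10 then k j else 0, fun j => if j ∈ S01 then k j else 0))⟩)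
      (j := fun p => fun j => p.2.1 j + p.2.2.1 j + p.2.2.2 j)
    · -- hi : forward membership
      intro k hk
      rw [Finset.mem_filter, hiff] at hk
      obtain ⟨-, hk1, hk2⟩ := hk
      rw [hT, Finset.mem_sigma, Finset.mem_range, Finset.mem_product, Finset.mem_product]
      dsimp only
      refine ⟨by omega, ?_, ?_, ?_⟩
      · rw [Finset.mem_piAntidiag]
        constructor
        · exact Finset.sum_congr rfl fun j hj => if_pos hj
        · intro j hj
          by_contra h
          simp [h] at hj
      · rw [Finset.mem_piAntidiag]
        constructor
        · rw [show (∑ j ∈ S10, if j ∈ S10 then k j else 0) = ∑ j ∈ S10, k j from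
            Finset.sum_congr rfl fun j hj => if_pos hj]
          omega
        · intro j hj
          by_contra h
          simp [h] at hj
      · rw [Finset.mem_piAntidiag]
        constructor
        · rw [show (∑ j ∈ S01, if j ∈ S01 then k j else 0) = ∑ j ∈ S01, k j from
            Finset.sum_congr rfl fun j hj => if_pos hj]
          omega
        · intro j hj
          by_contra h
          simp [h] at hj
    · -- hj : backward membership
      rintro ⟨t, k3, k1, k2⟩ hp
      rw [hT, Finset.mem_sigma, Finset.mem_range, Finset.mem_product, Finset.mem_product,
        Finset.mem_piAntidiag, Finset.mem_piAntidiag, Finset.mem_piAntidiag] at hp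
      dsimp only at hp
      obtain ⟨ht, ⟨h3s, h3m⟩, ⟨h1s, h1m⟩, ⟨h2s, h2m⟩⟩ := hp
      have h3s' : ∑ j ∈ S11, k3 j = t := h3s
      have h1s' : ∑ j ∈ S10, k1 j = b₁ - t := h1s
      have h2s' : ∑ j ∈ S01, k2 j = b₂ - t := h2s
      rw [Finset.mem_filter, hiff]
      have hsum3 : ∀ s : Finset (Fin n), Disjoint s S11 → ∑ j ∈ s, k3 j = 0 := by
        intro s hs
        refine Finset.sum_eq_zero fun j hj => ?_
        by_contra h
        exact (Finset.disjoint_left.1 hs hj) (h3m j h)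
      have hsum1 : ∀ s : Finset (Fin n), Disjoint s S10 → ∑ j ∈ s, k1 j = 0 := by
        intro s hs
        refine Finset.sum_eq_zero fun j hj => ?_
        by_contra h
        exact (Finset.disjoint_left.1 hs hj) (h1m j h)
      have hsum2 : ∀ s : Finset (Fin n), Disjoint s S01 → ∑ j ∈ s, k2 j = 0 := by
        intro s hs
        refine Finset.sum_eq_zero fun j hj => ?_
        by_contra h
        exact (Finset.disjoint_left.1 hs hj) (h2m j h)
    -- bound on values
      dsimp only
      refine ⟨?_, ?_, ?_⟩
      · rw [hB, Fintype.mem_piFinset]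
        intro j
        rw [Finset.mem_range]
        have e3 : k3 j ≤ t := by
          by_cases h : k3 j = 0
          · omega
          · exact le_trans (Finset.single_le_sum (f := k3)
              (fun _ _ => Nat.zero_le _) (h3m j h)) (le_of_eq h3s)
        have e1 : k1 j ≤ b₁ - t := by
          by_cases h : k1 j = 0
          · omega
          · exact le_trans (Finset.single_le_sum (f := k1)
              (fun _ _ => Nat.zero_le _) (h1m j h)) (le_of_eq h1s)
        have e2 : k2 j ≤ b₂ - t := by
          by_cases h : k2 j = 0
          · omega
          · exact le_trans (Finset.single_le_sum (f := k2)
              (fun _ _ => Nat.zero_le _) (h2m j h)) (le_of_eq h2s)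
        omega
      · rw [Finset.sum_add_distrib, Finset.sum_add_distrib,
          Finset.sum_add_distrib, Finset.sum_add_distrib,
          hsum3 S10 hd1, hsum2 S10 hd3,
          hsum1 S11 hd1.symm, hsum2 S11 hd0.symm]
        omega
      · rw [Finset.sum_add_distrib, Finset.sum_add_distrib,
          Finset.sum_add_distrib, Finset.sum_add_distrib,
          hsum3 S01 hd0, hsum1 S01 hd3.symm,
          hsum1 S11 hd1.symm, hsum2 S11 hd0.symm]
        omega
    · -- left inverse
      intro k hk
      funext j
      have h0 := hA 0 j; have h1 := hA 1 j; have hc := hcol j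
      by_cases h11 : j ∈ S11
      · have hn10 : j ∉ S10 := Finset.disjoint_right.1 hd1 h11
        have hn01 : j ∉ S01 := Finset.disjoint_right.1 hd0 h11
        simp [h11, hn10, hn01]
      · by_cases h10 : j ∈ S10
        · have hn01 : j ∉ S01 := Finset.disjoint_left.1 hd3 h10
          simp [h11, h10, hn01]
        · have h01 : j ∈ S01 := by
            have := hcover
            rw [hm01]
            rw [hm10] at h10; rw [hm11] at h11
            omega
          simp [h11, h10, h01]
    · -- right inverse
      rintro ⟨t, k3, k1, k2⟩ hp
      rw [hT, Finset.mem_sigma, Finset.mem_range, Finset.mem_product, Finset.mem_product,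
        Finset.mem_piAntidiag, Finset.mem_piAntidiag, Finset.mem_piAntidiag] at hp
      dsimp only at hp
      obtain ⟨ht, ⟨h3s, h3m⟩, ⟨h1s, h1m⟩, ⟨h2s, h2m⟩⟩ := hp
      have h3s' : ∑ j ∈ S11, k3 j = t := h3s
      have hz3 : ∀ j, j ∉ S11 → k3 j = 0 := fun j hj => by
        by_contra h; exact hj (h3m j h)
      have hz1 : ∀ j, j ∉ S10 → k1 j = 0 := fun j hj => by
        by_contra h; exact hj (h1m j h)
      have hz2 : ∀ j, j ∉ S01 → k2 j = 0 := fun j hj => by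
        by_contra h; exact hj (h2m j h)
      have e3 : (fun j => if j ∈ S11 then k3 j + k1 j + k2 j else 0) = k3 := by
        funext j
        by_cases h : j ∈ S11
        · rw [if_pos h, hz1 j (Finset.disjoint_right.1 hd1 h),
            hz2 j (Finset.disjoint_right.1 hd0 h)]
          omega
        · rw [if_neg h, hz3 j h]
      have e1 : (fun j => if j ∈ S10 then k3 j + k1 j + k2 j else 0) = k1 := by
        funext j
        by_cases h : j ∈ S10
        · rw [if_pos h, hz3 j (Finset.disjoint_left.1 hd1 h),
            hz2 j (Finset.disjoint_left.1 hd3 h)]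
          omega
        · rw [if_neg h, hz1 j h]
      have e2 : (fun j => if j ∈ S01 then k3 j + k1 j + k2 j else 0) = k2 := by
        funext j
        by_cases h : j ∈ S01
        · rw [if_pos h, hz3 j (Finset.disjoint_left.1 hd0 h),
            hz1 j (Finset.disjoint_right.1 hd3 h)]
          omega
        · rw [if_neg h, hz2 j h]
      have est : ∑ j ∈ S11, (k3 j + k1 j + k2 j) = t := by
        rw [Finset.sum_add_distrib, Finset.sum_add_distrib, h3s]
        have z1 : ∑ j ∈ S11, k1 j = 0 :=
          Finset.sum_eq_zero fun j hj => hz1 j (Finset.disjoint_right.1 hd1 hj)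
        have z2 : ∑ j ∈ S11, k2 j = 0 :=
          Finset.sum_eq_zero fun j hj => hz2 j (Finset.disjoint_right.1 hd0 hj)
        omega
      exact Sigma.ext est (by rw [est]; simp [e3, e1, e2])
    · -- value equality
      intro k hk
      dsimp only
      have hsplit : ∏ j, lam j ^ k j / (Nat.factorial (k j)) =
          (∏ j ∈ S11, lam j ^ k j / (Nat.factorial (k j))) *
          ((∏ j ∈ S10, lam j ^ k j / (Nat.factorial (k j))) *
           (∏ j ∈ S01, lam j ^ k j / (Nat.factorial (k j)))) := by
        rw [← Finset.prod_union hd3, ← Finset.prod_union hd2, hcover]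
      rw [hsplit]
      congr 1
      · exact Finset.prod_congr rfl fun j hj => by rw [if_pos hj]
      congr 1
      · exact Finset.prod_congr rfl fun j hj => by rw [if_pos hj]
      · exact Finset.prod_congr rfl fun j hj => by rw [if_pos hj]
  rw [hstep2, hT, Finset.sum_sigma]
  refine Finset.sum_congr rfl fun t ht => ?_
  rw [Finset.mem_range] at ht
  dsimp only
  rw [sum_prod_mul (S11.piAntidiag t) (S10.piAntidiag (b₁ - t)) (S01.piAntidiag (b₂ - t))
      (fun a => ∏ j ∈ S11, lam j ^ a j / (Nat.factorial (a j)))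
      (fun a => ∏ j ∈ S10, lam j ^ a j / (Nat.factorial (a j)))
      (fun a => ∏ j ∈ S01, lam j ^ a j / (Nat.factorial (a j)))]
  rw [sum_prod_piAntidiag, sum_prod_piAntidiag, sum_prod_piAntidiag]
  have hc11 : c11 = ∑ j ∈ S11, lam j := rfl
  have hc10 : c10 = ∑ j ∈ S10, lam j := rfl
  have hc01 : c01 = ∑ j ∈ S01, lam j := rfl
  rw [hc11, hc10, hc01]
  rw [div_mul_div_comm, div_mul_div_comm]
  push_cast
  ring
end

section
/- For A = [[1,0,1],[0,1,1]] and positive reals λ₁, λ₂, λ₃, the function F₀(b₁,b₂) = Σ_{k₁+k₃=b₁, k₂+k₃=b₂} λ₁^{k₁}λ₂^{k₂}λ₃^{k₃}/(k₁!k₂!k₃!) satisfies the recurrence λ₂(2+b₁) F₀(b₁+2,b₂) = -(-b₂λ₃ + b₁λ₃ + λ₃ - λ₁λ₂) F₀(b₁+1,b₂) + λ₁λ₃ F₀(b₁,b₂) for all nonnegative integers b₁, b₂. -/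
open scoped BigOperators

/-- `F₀(b₁,b₂) = Σ_{k₁+k₃=b₁, k₂+k₃=b₂} λ₁^{k₁}λ₂^{k₂}λ₃^{k₃}/(k₁!k₂!k₃!)`
for the matrix `A = [[1,0,1],[0,1,1]]`. -/
noncomputable def F0bimol (lam1 lam2 lam3 : ℝ) (b₁ b₂ : ℕ) : ℝ :=
  ∑' k : ℕ × ℕ × ℕ,
    if k.1 + k.2.2 = b₁ ∧ k.2.1 + k.2.2 = b₂ then
      lam1 ^ k.1 * lam2 ^ k.2.1 * lam3 ^ k.2.2 /
        (Nat.factorial k.1 * Nat.factorial k.2.1 * Nat.factorial k.2.2)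
    else 0

namespace BimolAux

noncomputable def T (l1 l2 l3 : ℝ) (b₂ b j : ℕ) : ℝ :=
  if j ≤ b then
    l1 ^ (b - j) * l2 ^ (b₂ - j) * l3 ^ j /
      ((Nat.factorial (b - j) : ℝ) * (Nat.factorial (b₂ - j) : ℝ) * (Nat.factorial j : ℝ))
  else 0

lemma F0_eq (l1 l2 l3 : ℝ) (b b₂ : ℕ) :
    F0bimol l1 l2 l3 b b₂ = ∑ j ∈ Finset.range (b₂ + 1), T l1 l2 l3 b₂ b j := by
  classical
  have hinj : Function.Injective (fun j : ℕ => ((b - j, b₂ - j, j) : ℕ × ℕ × ℕ)) := by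
    intro i j h
    simpa using congrArg (fun p : ℕ × ℕ × ℕ => p.2.2) h
  rw [F0bimol, tsum_eq_sum
    (s := (Finset.range (b₂ + 1)).image (fun j => ((b - j, b₂ - j, j) : ℕ × ℕ × ℕ)))]
  · rw [Finset.sum_image (fun i _ j _ h => hinj h)]
    refine Finset.sum_congr rfl ?_
    intro j hj
    simp only [Finset.mem_range] at hj
    by_cases hjb : j ≤ b
    · rw [if_pos ⟨Nat.sub_add_cancel hjb, Nat.sub_add_cancel (Nat.lt_succ_iff.mp hj)⟩,
        T, if_pos hjb]
    · rw [T, if_neg hjb, if_neg]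
      rintro ⟨hc, -⟩
      simp only [] at hc
      change b - j + j = b at hc
      omega
  · intro k hk
    rw [if_neg]
    rintro ⟨hc1, hc2⟩
    apply hk
    refine Finset.mem_image.mpr ⟨k.2.2, Finset.mem_range.mpr (by omega), ?_⟩
    obtain ⟨k1, k2, k3⟩ := k
    simp only at hc1 hc2 ⊢
    refine Prod.ext ?_ (Prod.ext ?_ rfl) <;> simp <;> omega


lemma factpos (n : ℕ) : ((Nat.factorial n : ℕ) : ℝ) ≠ 0 := by
  exact_mod_cast (Nat.factorial_pos n).ne'

/-- (A): `(b+1-j) * T (b+1) j = l1 * T b j`. -/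
lemma lemA (l1 l2 l3 : ℝ) (b₂ b j : ℕ) :
    ((b : ℝ) + 1 - j) * T l1 l2 l3 b₂ (b + 1) j = l1 * T l1 l2 l3 b₂ b j := by
  by_cases h : j ≤ b
  · rw [T, T, if_pos (by omega), if_pos h]
    have e1 : b + 1 - j = (b - j) + 1 := by omega
    have e2 : ((b : ℝ) + 1 - j) = ((b - j : ℕ) : ℝ) + 1 := by
      push_cast [Nat.cast_sub h]; ring
    rw [e1, e2]
    obtain ⟨a, ha⟩ : ∃ a, b - j = a := ⟨_, rfl⟩
    rw [ha, pow_succ, Nat.factorial_succ]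
    have h0 : ((a : ℕ) : ℝ) + 1 ≠ 0 := by positivity
    have f1 := factpos a
    have f2 := factpos (b₂ - j)
    have f3 := factpos j
    push_cast
    field_simp
  · by_cases h2 : j ≤ b + 1
    · have hj : j = b + 1 := by omega
      subst hj
      have hT : T l1 l2 l3 b₂ b (b + 1) = 0 := if_neg h
      rw [hT, mul_zero]
      have : ((b : ℝ) + 1 - ((b + 1 : ℕ) : ℝ)) = 0 := by push_cast; ring
      rw [this, zero_mul]
    · rw [T, T, if_neg (by omega), if_neg h]
      ring

/-- (B): for `j < b₂`: `(j+1) * l2 * T (b+1) (j+1) = (b₂-j) * l3 * T b j`. -/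
lemma lemB (l1 l2 l3 : ℝ) (b₂ b j : ℕ) (hj : j < b₂) :
    ((j : ℝ) + 1) * l2 * T l1 l2 l3 b₂ (b + 1) (j + 1) =
      ((b₂ : ℝ) - j) * l3 * T l1 l2 l3 b₂ b j := by
  by_cases h : j ≤ b
  · rw [T, T, if_pos (by omega), if_pos h]
    have e1 : b + 1 - (j + 1) = b - j := by omega
    have e2 : b₂ - j = (b₂ - (j + 1)) + 1 := by omega
    have e3 : ((b₂ : ℝ) - j) = ((b₂ - (j + 1) : ℕ) : ℝ) + 1 := by
      push_cast [Nat.cast_sub (by omega : j + 1 ≤ b₂)]; ring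
    rw [e1, e2, e3]
    obtain ⟨c, hc⟩ : ∃ c, b₂ - (j + 1) = c := ⟨_, rfl⟩
    rw [hc, pow_succ, Nat.factorial_succ, Nat.factorial_succ]
    have h0 : ((c : ℕ) : ℝ) + 1 ≠ 0 := by positivity
    have h1 : ((j : ℝ) + 1) ≠ 0 := by positivity
    have f1 := factpos c
    have f2 := factpos (b - j)
    have f3 := factpos j
    push_cast
    field_simp
    ring
  · rw [T, T, if_neg (by omega), if_neg h]
    ring

/-- Claim 1 summed. -/
lemma claim1 (l1 l2 l3 : ℝ) (b₂ b : ℕ) :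
    ∑ j ∈ Finset.range (b₂ + 1), ((b : ℝ) + 1 - j) * T l1 l2 l3 b₂ (b + 1) j =
      l1 * ∑ j ∈ Finset.range (b₂ + 1), T l1 l2 l3 b₂ b j := by
  rw [Finset.mul_sum]
  exact Finset.sum_congr rfl fun j _ => lemA l1 l2 l3 b₂ b j

/-- Claim 2 summed. -/
lemma claim2 (l1 l2 l3 : ℝ) (b₂ b : ℕ) :
    ∑ j ∈ Finset.range (b₂ + 1), (j : ℝ) * l2 * T l1 l2 l3 b₂ (b + 1) j =
      ∑ j ∈ Finset.range (b₂ + 1), ((b₂ : ℝ) - j) * l3 * T l1 l2 l3 b₂ b j := by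
  rw [Finset.sum_range_succ' (fun j => (j : ℝ) * l2 * T l1 l2 l3 b₂ (b + 1) j) b₂,
    Finset.sum_range_succ]
  simp only [Nat.cast_zero, zero_mul, add_zero, sub_self]
  refine Finset.sum_congr rfl ?_
  intro j hj
  simp only [Finset.mem_range] at hj
  push_cast
  exact lemB l1 l2 l3 b₂ b j hj

end BimolAux

/-- The recurrence in `b₁` for the bimolecular conservation matrix
`A = [[1,0,1],[0,1,1]]`:
`λ₂(2+b₁) F₀(b₁+2,b₂) = -(-b₂λ₃ + b₁λ₃ + λ₃ - λ₁λ₂) F₀(b₁+1,b₂) + λ₁λ₃ F₀(b₁,b₂)`. -/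
theorem bimolecular_recurrence (lam1 lam2 lam3 : ℝ)
    (h1 : 0 < lam1) (h2 : 0 < lam2) (h3 : 0 < lam3) :
    ∀ b₁ b₂ : ℕ,
      lam2 * (2 + (b₁ : ℝ)) * F0bimol lam1 lam2 lam3 (b₁ + 2) b₂ =
        -(-(b₂ : ℝ) * lam3 + (b₁ : ℝ) * lam3 + lam3 - lam1 * lam2) *
            F0bimol lam1 lam2 lam3 (b₁ + 1) b₂ +
          lam1 * lam3 * F0bimol lam1 lam2 lam3 b₁ b₂ := by
  intro b₁ b₂
  rw [BimolAux.F0_eq, BimolAux.F0_eq, BimolAux.F0_eq,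
    show b₁ + 2 = b₁ + 1 + 1 from rfl]
  have e1 :
      lam2 * (2 + (b₁ : ℝ)) *
          ∑ j ∈ Finset.range (b₂ + 1), BimolAux.T lam1 lam2 lam3 b₂ (b₁ + 1 + 1) j =
        lam2 * ∑ j ∈ Finset.range (b₂ + 1),
            (((b₁ + 1 : ℕ) : ℝ) + 1 - (j : ℝ)) * BimolAux.T lam1 lam2 lam3 b₂ (b₁ + 1 + 1) j +
          ∑ j ∈ Finset.range (b₂ + 1),
            (j : ℝ) * lam2 * BimolAux.T lam1 lam2 lam3 b₂ (b₁ + 1 + 1) j := by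
    rw [Finset.mul_sum, Finset.mul_sum, ← Finset.sum_add_distrib]
    refine Finset.sum_congr rfl ?_
    intro j _
    push_cast
    ring
  rw [e1, BimolAux.claim1 lam1 lam2 lam3 b₂ (b₁ + 1),
    BimolAux.claim2 lam1 lam2 lam3 b₂ (b₁ + 1)]
  have e2 :
      ∑ j ∈ Finset.range (b₂ + 1),
          ((b₂ : ℝ) - (j : ℝ)) * lam3 * BimolAux.T lam1 lam2 lam3 b₂ (b₁ + 1) j =
        ((b₂ : ℝ) - (b₁ : ℝ) - 1) * lam3 *
            ∑ j ∈ Finset.range (b₂ + 1), BimolAux.T lam1 lam2 lam3 b₂ (b₁ + 1) j +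
          lam3 * ∑ j ∈ Finset.range (b₂ + 1),
            ((b₁ : ℝ) + 1 - (j : ℝ)) * BimolAux.T lam1 lam2 lam3 b₂ (b₁ + 1) j := by
    rw [Finset.mul_sum, Finset.mul_sum, ← Finset.sum_add_distrib]
    refine Finset.sum_congr rfl ?_
    intro j _
    ring
  rw [e2, BimolAux.claim1 lam1 lam2 lam3 b₂ b₁]
  ring
end

section
/- Key Lemma: Suppose a chemical reaction network with reactions i ∈ R, source and target complex maps S, T : R → C ⊆ ℤ₊ⁿ, and rate constants kᵢ > 0 admits a complex-balanced steady state x̄ ∈ ℝⁿ_{>0}, i.e., for every complex c ∈ C, Σ_{i: T(i)=c} kᵢ x̄^{S(i)} = Σ_{i: S(i)=c} kᵢ x̄^{S(i)}. Then for any function α : C → ℝ, Σ_{i ∈ R} kᵢ x̄^{S(i)-T(i)} α(T(i)) = Σ_{i ∈ R} kᵢ α(S(i)). -/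
open scoped BigOperators

/-- Key Lemma: if `x̄ > 0` is a complex-balanced steady state of a reaction network
(with reactions `i : ι`, source/target complexes `S i, T i ∈ ℤ₊ⁿ` and rates `k i > 0`),
then for every function `α` on complexes,
`Σᵢ kᵢ x̄^{S(i)-T(i)} α(T(i)) = Σᵢ kᵢ α(S(i))`. -/
theorem key_lemma {n : ℕ} {ι : Type*} [Fintype ι]
    (S T : ι → (Fin n → ℕ)) (k : ι → ℝ) (hk : ∀ i, 0 < k i)
    (x : Fin n → ℝ) (hx : ∀ l, 0 < x l)
    (hbal : ∀ c : Fin n → ℕ,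
      ∑ i ∈ Finset.univ.filter (fun i => T i = c), k i * ∏ l, x l ^ S i l =
      ∑ i ∈ Finset.univ.filter (fun i => S i = c), k i * ∏ l, x l ^ S i l)
    (α : (Fin n → ℕ) → ℝ) :
    ∑ i : ι, k i * (∏ l, x l ^ ((S i l : ℤ) - (T i l : ℤ))) * α (T i) =
      ∑ i : ι, k i * α (S i) := by
  classical
  set u := (Finset.univ.image S) ∪ (Finset.univ.image T) with hu
  have hTmem : ∀ i : ι, T i ∈ u := fun i =>
    Finset.mem_union_right _ (Finset.mem_image_of_mem T (Finset.mem_univ i))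
  have hSmem : ∀ i : ι, S i ∈ u := fun i =>
    Finset.mem_union_left _ (Finset.mem_image_of_mem S (Finset.mem_univ i))
  rw [← Finset.sum_fiberwise_of_maps_to (fun i _ => hTmem i)
        (fun i => k i * (∏ l, x l ^ ((S i l : ℤ) - (T i l : ℤ))) * α (T i)),
      ← Finset.sum_fiberwise_of_maps_to (fun i _ => hSmem i)
        (fun i => k i * α (S i))]
  refine Finset.sum_congr rfl fun c _ => ?_
  have hxne : ∀ l, x l ≠ 0 := fun l => (hx l).ne'
  have hQpos : (0:ℝ) < ∏ l, x l ^ c l := Finset.prod_pos (fun l _ => pow_pos (hx l) _)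
  calc
    ∑ i ∈ Finset.univ.filter (fun i => T i = c),
        k i * (∏ l, x l ^ ((S i l : ℤ) - (T i l : ℤ))) * α (T i)
      = ∑ i ∈ Finset.univ.filter (fun i => T i = c),
          (k i * ∏ l, x l ^ S i l) * ((∏ l, x l ^ c l)⁻¹ * α c) := by
        refine Finset.sum_congr rfl fun i hi => ?_
        have hTi : T i = c := (Finset.mem_filter.mp hi).2
        have hprod : (∏ l, x l ^ ((S i l : ℤ) - (T i l : ℤ)))
            = (∏ l, x l ^ S i l) * (∏ l, x l ^ c l)⁻¹ := by
          rw [← hTi, ← Finset.prod_inv_distrib, ← Finset.prod_mul_distrib]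
          refine Finset.prod_congr rfl fun l _ => ?_
          rw [zpow_sub₀ (hxne l), zpow_natCast, zpow_natCast]
          ring
        rw [hprod, hTi]
        ring
    _ = (∑ i ∈ Finset.univ.filter (fun i => T i = c),
          k i * ∏ l, x l ^ S i l) * ((∏ l, x l ^ c l)⁻¹ * α c) := by
        rw [Finset.sum_mul]
    _ = (∑ i ∈ Finset.univ.filter (fun i => S i = c),
          k i * ∏ l, x l ^ S i l) * ((∏ l, x l ^ c l)⁻¹ * α c) := by
        rw [hbal c]
    _ = ∑ i ∈ Finset.univ.filter (fun i => S i = c), k i * α (S i) := by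
        rw [Finset.sum_mul]
        refine Finset.sum_congr rfl fun i hi => ?_
        have hSi : S i = c := (Finset.mem_filter.mp hi).2
        rw [hSi]
        field_simp
end

section
/- Corollary (product-form stationary solution): Under the hypotheses of the Key Lemma, the vector π with entries P(N) = x̄^N / N! for N ∈ ℤ₊ⁿ satisfies the steady-state Chemical Master Equation: Σ_{i ∈ R} P(N - T(i) + S(i)) A_i(N - T(i) + S(i)) = Σ_{i ∈ R} P(N) A_i(N) for every N ∈ ℤ₊ⁿ, where A_i(N) = kᵢ N!/(N - S(i))! (interpreted as 0 when some component of N - S(i) is negative). -/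
open scoped BigOperators

/-- The product-form vector `P(N) = x̄^N / N!`. -/
noncomputable def prodForm {n : ℕ} (x : Fin n → ℝ) (N : Fin n → ℕ) : ℝ :=
  (∏ l, x l ^ N l) / ∏ l, (Nat.factorial (N l) : ℝ)

/-- The propensity function `A_i(N) = kᵢ N!/(N-S(i))!` (componentwise falling
factorials; it vanishes when some component of `N - S(i)` is negative). -/
noncomputable def propensity {n : ℕ} {ι : Type*} (S : ι → (Fin n → ℕ)) (k : ι → ℝ)
    (i : ι) (N : Fin n → ℕ) : ℝ :=
  k i * ∏ l, ((N l).descFactorial (S i l) : ℝ)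

lemma desc_fact_cast (a c : ℕ) (h : c ≤ a) :
    ((a - c).factorial : ℝ) * (a.descFactorial c : ℝ) = (a.factorial : ℝ) := by
  exact_mod_cast congrArg (Nat.cast (R := ℝ)) (Nat.factorial_mul_descFactorial h)

/-- Corollary: if `x̄ > 0` is a complex-balanced steady state, then `P(N) = x̄^N/N!`
solves the steady-state Chemical Master Equation
`Σᵢ P(N - T(i) + S(i)) A_i(N - T(i) + S(i)) = Σᵢ P(N) A_i(N)`
(terms with a negative component of `N - T(i) + S(i)` are taken to be 0). -/
theorem product_form_ssCME {n : ℕ} {ι : Type*} [Fintype ι]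
    (S T : ι → (Fin n → ℕ)) (k : ι → ℝ) (hk : ∀ i, 0 < k i)
    (x : Fin n → ℝ) (hx : ∀ l, 0 < x l)
    (hbal : ∀ c : Fin n → ℕ,
      ∑ i ∈ Finset.univ.filter (fun i => T i = c), k i * ∏ l, x l ^ S i l =
      ∑ i ∈ Finset.univ.filter (fun i => S i = c), k i * ∏ l, x l ^ S i l) :
    ∀ N : Fin n → ℕ,
      (∑ i : ι,
        if ∀ l, T i l ≤ N l + S i l then
          prodForm x (fun l => N l + S i l - T i l) *
            propensity S k i (fun l => N l + S i l - T i l)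
        else 0) =
      ∑ i : ι, prodForm x N * propensity S k i N := by
  classical
  intro N
  set w : ι → ℝ := fun i => k i * ∏ l, x l ^ S i l with hw
  set F : (Fin n → ℕ) → ℝ := fun c =>
    if ∀ l, c l ≤ N l then (∏ l, x l ^ (N l - c l)) / ∏ l, ((N l - c l).factorial : ℝ)
    else 0 with hF
  have hfact : ∀ m : ℕ, ((m.factorial : ℝ)) ≠ 0 := fun m =>
    Nat.cast_ne_zero.2 (Nat.factorial_ne_zero m)
  -- right-hand side terms
  have hR : ∀ i, prodForm x N * propensity S k i N = F (S i) * w i := by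
    intro i
    by_cases h : ∀ l, S i l ≤ N l
    · have key : ∏ l, (x l ^ N l * (((N l).descFactorial (S i l)) : ℝ) / ((N l).factorial : ℝ))
          = ∏ l, (x l ^ (N l - S i l) * x l ^ (S i l) / ((N l - S i l).factorial : ℝ)) := by
        refine Finset.prod_congr rfl fun l _ => ?_
        have h1 := desc_fact_cast (N l) (S i l) (h l)
        have h2 : x l ^ N l = x l ^ (N l - S i l) * x l ^ S i l := by
          rw [← pow_add]; congr 1; have := h l; omega
        rw [h2, div_eq_div_iff (hfact _) (hfact _)]
        calc x l ^ (N l - S i l) * x l ^ S i l * (((N l).descFactorial (S i l)) : ℝ) *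
              ((N l - S i l).factorial : ℝ)
            = x l ^ (N l - S i l) * x l ^ S i l *
              (((N l - S i l).factorial : ℝ) * (((N l).descFactorial (S i l)) : ℝ)) := by ring
          _ = x l ^ (N l - S i l) * x l ^ S i l * ((N l).factorial : ℝ) := by rw [h1]
      simp only [Finset.prod_div_distrib, Finset.prod_mul_distrib] at key
      simp only [prodForm, propensity, hF, if_pos h]
      linear_combination (k i) * key
    · push_neg at h
      obtain ⟨l0, hl0⟩ := h
      have hz : (((N l0).descFactorial (S i l0)) : ℝ) = 0 := by
        rw [Nat.cast_eq_zero, Nat.descFactorial_eq_zero_iff_lt]; exact hl0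
      have : propensity S k i N = 0 := by
        simp only [propensity]
        rw [Finset.prod_eq_zero (Finset.mem_univ l0) hz, mul_zero]
      rw [this]
      simp only [hF]
      rw [if_neg (fun hall => absurd (hall l0) (by omega))]
      ring
  -- left-hand side terms
  have hL : ∀ i, (if ∀ l, T i l ≤ N l + S i l then
          prodForm x (fun l => N l + S i l - T i l) *
            propensity S k i (fun l => N l + S i l - T i l)
        else 0) = F (T i) * w i := by
    intro i
    by_cases hT : ∀ l, T i l ≤ N l + S i l
    · rw [if_pos hT]
      by_cases hN : ∀ l, T i l ≤ N l
      · have key : ∏ l, (x l ^ (N l + S i l - T i l) *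
              (((N l + S i l - T i l).descFactorial (S i l)) : ℝ)
              / ((N l + S i l - T i l).factorial : ℝ))
            = ∏ l, (x l ^ (N l - T i l) * x l ^ (S i l) / ((N l - T i l).factorial : ℝ)) := by
          refine Finset.prod_congr rfl fun l _ => ?_
          have hMl : N l + S i l - T i l = (N l - T i l) + S i l := by
            have := hN l; omega
          have h1 := desc_fact_cast (N l + S i l - T i l) (S i l) (by omega)
          rw [show N l + S i l - T i l - S i l = N l - T i l by omega] at h1
          have h2 : x l ^ (N l + S i l - T i l) = x l ^ (N l - T i l) * x l ^ S i l := by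
            rw [← pow_add, hMl]
          rw [h2, div_eq_div_iff (hfact _) (hfact _)]
          calc x l ^ (N l - T i l) * x l ^ S i l *
                (((N l + S i l - T i l).descFactorial (S i l)) : ℝ) *
                ((N l - T i l).factorial : ℝ)
              = x l ^ (N l - T i l) * x l ^ S i l *
                (((N l - T i l).factorial : ℝ) *
                  (((N l + S i l - T i l).descFactorial (S i l)) : ℝ)) := by ring
            _ = x l ^ (N l - T i l) * x l ^ S i l *
                ((N l + S i l - T i l).factorial : ℝ) := by rw [h1]
        simp only [Finset.prod_div_distrib, Finset.prod_mul_distrib] at key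
        simp only [prodForm, propensity, hF, if_pos hN]
        linear_combination (k i) * key
      · push_neg at hN
        obtain ⟨l0, hl0⟩ := hN
        have hz : (((N l0 + S i l0 - T i l0).descFactorial (S i l0)) : ℝ) = 0 := by
          rw [Nat.cast_eq_zero, Nat.descFactorial_eq_zero_iff_lt]
          have := hT l0; omega
        have : propensity S k i (fun l => N l + S i l - T i l) = 0 := by
          simp only [propensity]
          rw [Finset.prod_eq_zero (Finset.mem_univ l0) hz, mul_zero]
        rw [this]
        simp only [hF]
        rw [if_neg (fun hall => absurd (hall l0) (by omega))]
        ring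
    · rw [if_neg hT]
      push_neg at hT
      obtain ⟨l0, hl0⟩ := hT
      simp only [hF]
      rw [if_neg (fun hall => absurd (hall l0) (by omega))]
      ring
  rw [Finset.sum_congr rfl (fun i _ => hL i), Finset.sum_congr rfl (fun i _ => hR i)]
  -- fiberwise regrouping
  set B : Finset (Fin n → ℕ) := Finset.univ.image T ∪ Finset.univ.image S with hB
  have hTmem : ∀ i ∈ (Finset.univ : Finset ι), T i ∈ B := fun i _ =>
    Finset.mem_union_left _ (Finset.mem_image_of_mem T (Finset.mem_univ i))
  have hSmem : ∀ i ∈ (Finset.univ : Finset ι), S i ∈ B := fun i _ =>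
    Finset.mem_union_right _ (Finset.mem_image_of_mem S (Finset.mem_univ i))
  rw [← Finset.sum_fiberwise_of_maps_to hTmem (fun i => F (T i) * w i),
      ← Finset.sum_fiberwise_of_maps_to hSmem (fun i => F (S i) * w i)]
  refine Finset.sum_congr rfl fun c _ => ?_
  have e1 : ∑ i ∈ Finset.univ.filter (fun i => T i = c), F (T i) * w i
      = F c * ∑ i ∈ Finset.univ.filter (fun i => T i = c), w i := by
    rw [Finset.mul_sum]
    refine Finset.sum_congr rfl fun i hi => ?_
    rw [(Finset.mem_filter.1 hi).2]
  have e2 : ∑ i ∈ Finset.univ.filter (fun i => S i = c), F (S i) * w i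
      = F c * ∑ i ∈ Finset.univ.filter (fun i => S i = c), w i := by
    rw [Finset.mul_sum]
    refine Finset.sum_congr rfl fun i hi => ?_
    rw [(Finset.mem_filter.1 hi).2]
  rw [e1, e2, hbal c]
end

section
/- Conditional mean formula (case r=1): With X₁,…,Xₙ independent Poisson(λⱼ) and Y = A·X for a nonnegative integer matrix A, E[Xⱼ | Y = b] = λⱼ · F₀(b₁ - a_{1j}, …, b_m - a_{mj}) / F₀(b₁,…,b_m), provided all b_i - a_{ij} ≥ 0 and F₀(b) > 0; if some b_i - a_{ij} < 0 then E[Xⱼ | Y=b] = 0. -/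
/-!
Let `ν` be the law of `X = (X₁, …, Xₙ)`. By independence `ν{k} = e^{-Σλ} ∏ₗ λₗ^{kₗ}/kₗ!`, so
`P(A·X = b) = e^{-Σλ} F₀(b)`. These masses satisfy `(kⱼ + 1) ν{k + eⱼ} = λⱼ ν{k}`, and
reindexing the sum over `k` along `k ↦ k + eⱼ` gives the Poisson identity
`E[Xⱼ; X ∈ S] = λⱼ P(X + eⱼ ∈ S)`. For `S = {A·k = b}` the event `A·(X + eⱼ) = b` is
`A·X = b - A_{·j}` when `A_{·j} ≤ b` and is empty otherwise; dividing by `P(A·X = b)` gives both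
cases.
-/

open MeasureTheory ProbabilityTheory Real
open scoped BigOperators ENNReal

section Shift

variable {ι : Type*} [DecidableEq ι]

lemma tsum_comp_add_single {f : (ι → ℕ) → ℝ≥0∞} (j : ι) (hf : ∀ k, k j = 0 → f k = 0) :
    ∑' k, f (k + (Pi.single j 1 : ι → ℕ)) = ∑' k, f k := by
  refine (add_left_injective _).tsum_eq fun k hk =>
    ⟨k - Pi.single j 1, tsub_add_cancel_of_le fun l => ?_⟩
  rcases eq_or_ne l j with rfl | hl
  · simpa [Nat.one_le_iff_ne_zero] using mt (hf k) hk
  · simp [hl]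

lemma lintegral_eval_mul_eq_mul_lintegral_add_single [Finite ι] (ν : Measure (ι → ℕ))
    (j : ι) (r : ℝ≥0∞) (hν : ∀ k, (k j + 1 : ℝ≥0∞) * ν {k + Pi.single j 1} = r * ν {k})
    (g : (ι → ℕ) → ℝ≥0∞) :
    ∫⁻ k, k j * g k ∂ν = r * ∫⁻ k, g (k + Pi.single j 1) ∂ν := by
  rw [lintegral_countable', lintegral_countable', ← ENNReal.tsum_mul_left,
    ← tsum_comp_add_single j fun k hk => by simp [hk]]
  refine tsum_congr fun k => ?_
  calc (((k + Pi.single j 1 : ι → ℕ) j : ℕ) : ℝ≥0∞) * g (k + Pi.single j 1)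
        * ν {k + Pi.single j 1}
      = g (k + Pi.single j 1) * ((k j + 1 : ℝ≥0∞) * ν {k + Pi.single j 1}) := by
        simp only [Pi.add_apply, Pi.single_eq_same, Nat.cast_add, Nat.cast_one]
        ring
    _ = r * (g (k + Pi.single j 1) * ν {k}) := by rw [hν]; ring

lemma setLIntegral_eval_eq_mul_measure_preimage_add_single [Finite ι] (ν : Measure (ι → ℕ))
    (j : ι) (r : ℝ≥0∞) (hν : ∀ k, (k j + 1 : ℝ≥0∞) * ν {k + Pi.single j 1} = r * ν {k})
    (S : Set (ι → ℕ)) :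
    ∫⁻ k in S, (k j : ℝ≥0∞) ∂ν = r * ν ((· + Pi.single j 1) ⁻¹' S) := by
  rw [← lintegral_indicator .of_discrete, ← lintegral_indicator_one .of_discrete]
  convert lintegral_eval_mul_eq_mul_lintegral_add_single ν j r hν (S.indicator 1) using 3 with k
  · by_cases hk : k ∈ S <;> simp [hk]
  · rfl

end Shift

lemma succ_mul_poisson_pmf_succ (r : ℝ) (n : ℕ) :
    (n + 1) * (exp (-r) * r ^ (n + 1) / (n + 1).factorial) =
      r * (exp (-r) * r ^ n / n.factorial) := by
  rw [Nat.factorial_succ, Nat.cast_mul, pow_succ]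
  field_simp
  push_cast
  ring

lemma Fintype.prod_apply_add_single {ι M : Type*} [Fintype ι] [DecidableEq ι] [CommMonoid M]
    (f : ι → ℕ → M) (k : ι → ℕ) (j : ι) :
    ∏ l, f l ((k + Pi.single j 1 : ι → ℕ) l) = f j (k j + 1) * ∏ l ∈ {j}ᶜ, f l (k l) := by
  rw [Fintype.prod_eq_mul_prod_compl j]
  congr 1
  · simp
  · refine Finset.prod_congr rfl fun l hl => ?_
    simp [(by simpa using hl : l ≠ j)]

lemma succ_mul_measure_singleton_add_single {ι : Type*} [Fintype ι] [DecidableEq ι]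
    (ν : Measure (ι → ℕ)) (lam : ι → ℝ) (hlam : ∀ l, 0 ≤ lam l)
    (hν : ∀ k, ν {k} = ∏ l, ENNReal.ofReal (exp (-lam l) * lam l ^ k l / (k l).factorial))
    (k : ι → ℕ) (j : ι) :
    (k j + 1 : ℝ≥0∞) * ν {k + Pi.single j 1} = ENNReal.ofReal (lam j) * ν {k} := by
  rw [hν, hν, Fintype.prod_apply_add_single
      (fun l n => ENNReal.ofReal (exp (-lam l) * lam l ^ n / n.factorial)),
    Fintype.prod_eq_mul_prod_compl j, ← mul_assoc, ← mul_assoc]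
  congr 1
  rw [← ENNReal.ofReal_mul (hlam j), ← succ_mul_poisson_pmf_succ,
    ENNReal.ofReal_mul (by positivity)]
  norm_cast

lemma ProbabilityTheory.iIndepFun.map_apply_singleton {Ω ι : Type*} [MeasurableSpace Ω]
    {μ : Measure Ω} [Fintype ι] {β : ι → Type*} [∀ i, MeasurableSpace (β i)]
    [∀ i, MeasurableSingletonClass (β i)] {X : ∀ i, Ω → β i} (hX : ∀ i, Measurable (X i))
    (h : iIndepFun X μ) (k : ∀ i, β i) :
    μ.map (fun ω i => X i ω) {k} = ∏ i, μ (X i ⁻¹' {k i}) := by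
  have hpre : (fun ω i => X i ω) ⁻¹' {k} = ⋂ i ∈ Finset.univ, X i ⁻¹' {k i} := by
    ext ω
    simp [funext_iff]
  rw [Measure.map_apply (measurable_pi_lambda _ hX) (measurableSet_singleton k), hpre]
  simpa using h.measure_inter_preimage_eq_mul Finset.univ (sets := fun i => {k i})
    fun i _ => measurableSet_singleton _

namespace Matrix

variable {m ι : Type*} [Fintype ι] [DecidableEq ι]

lemma preimage_add_single_mulVec_preimage_of_le (A : Matrix m ι ℕ) {b : m → ℕ} {j : ι}
    (h : A.col j ≤ b) :
    (· + (Pi.single j 1 : ι → ℕ)) ⁻¹' (A.mulVec ⁻¹' {b}) = A.mulVec ⁻¹' {b - A.col j} := by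
  ext k
  simp [mulVec_add, eq_tsub_iff_add_eq_of_le h]

lemma preimage_add_single_mulVec_preimage_of_not_le (A : Matrix m ι ℕ) {b : m → ℕ} {j : ι}
    (h : ¬ A.col j ≤ b) :
    (· + (Pi.single j 1 : ι → ℕ)) ⁻¹' (A.mulVec ⁻¹' {b}) = ∅ := by
  ext k
  simp only [Set.mem_preimage, Set.mem_singleton_iff, mulVec_add, mulVec_single_one,
    Set.mem_empty_iff_false, iff_false]
  rintro rfl
  exact h le_add_self

end Matrix

lemma toReal_measure_mulVec_preimage_eq_mul_F0 {m n : ℕ} (ν : Measure (Fin n → ℕ))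
    (lam : Fin n → ℝ) (hlam : ∀ l, 0 ≤ lam l)
    (hν : ∀ k, ν {k} = ∏ l, ENNReal.ofReal (exp (-lam l) * lam l ^ k l / (k l).factorial))
    (A : Fin m → Fin n → ℕ) (b : Fin m → ℕ) :
    (ν ((Matrix.of A).mulVec ⁻¹' {b})).toReal = (∏ l, exp (-lam l)) * F0 A lam b := by
  have hν_ne_top (k : Fin n → ℕ) : ν {k} ≠ ∞ := by
    rw [hν]
    exact ENNReal.prod_ne_top fun _ _ => ENNReal.ofReal_ne_top
  rw [← ν.tsum_indicator_apply_singleton _ .of_discrete,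
    ENNReal.tsum_toReal_eq fun k =>
      ne_top_of_le_ne_top (hν_ne_top k) (Set.indicator_le_self _ _ k),
    F0, ← tsum_mul_left]
  refine tsum_congr fun k => ?_
  have hmem : k ∈ (Matrix.of A).mulVec ⁻¹' {b} ↔ ∀ i, ∑ l, A i l * k l = b i := funext_iff
  by_cases hk : ∀ i, ∑ l, A i l * k l = b i
  · rw [Set.indicator_of_mem (hmem.mpr hk), if_pos hk, hν, ENNReal.toReal_prod,
      ← Finset.prod_mul_distrib]
    refine Finset.prod_congr rfl fun l _ => ?_
    rw [ENNReal.toReal_ofReal (by have := hlam l; positivity)]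
    ring
  · rw [Set.indicator_of_notMem (mt hmem.mp hk), if_neg hk]
    simp

lemma integral_natCast_cond_preimage {Ω β : Type*} [MeasurableSpace Ω] [MeasurableSpace β]
    (μ : Measure Ω) {T : Ω → β} (hT : Measurable T) {f : β → ℕ} (hf : Measurable f)
    {S : Set β} (hS : MeasurableSet S) :
    ∫ ω, (f (T ω) : ℝ) ∂μ[|T ⁻¹' S] =
      ((μ.map T) S).toReal⁻¹ * (∫⁻ y in S, f y ∂μ.map T).toReal := by
  rw [ProbabilityTheory.cond, integral_smul_measure,
    integral_eq_lintegral_of_nonneg_ae (.of_forall fun ω => Nat.cast_nonneg _)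
      (by fun_prop : Measurable fun ω => (f (T ω) : ℝ)).aestronglyMeasurable,
    Measure.restrict_map hT hS, lintegral_map (by fun_prop) hT, Measure.map_apply hT hS,
    ENNReal.toReal_inv, smul_eq_mul]
  simp

theorem conditional_mean_general
    {Ω : Type*} [MeasurableSpace Ω] (μ : Measure Ω)
    {m n : ℕ} (A : Fin m → Fin n → ℕ) (lam : Fin n → ℝ) (hlam : ∀ j, 0 < lam j)
    (X : Fin n → Ω → ℕ) (hXm : ∀ j, Measurable (X j))
    (hindep : iIndepFun X μ)
    (hX : ∀ j k, μ (X j ⁻¹' {k}) =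
      ENNReal.ofReal (Real.exp (-lam j) * lam j ^ k / Nat.factorial k))
    (b : Fin m → ℕ) (j : Fin n) :
    ((∀ i, A i j ≤ b i) →
      ∫ ω, ((X j ω : ℝ)) ∂(μ[|{ω | ∀ i, ∑ j', A i j' * X j' ω = b i}]) =
        lam j * F0 A lam (fun i => b i - A i j) / F0 A lam b) ∧
    ((∃ i, b i < A i j) →
      ∫ ω, ((X j ω : ℝ)) ∂(μ[|{ω | ∀ i, ∑ j', A i j' * X j' ω = b i}]) = 0) := by
  set T : Ω → Fin n → ℕ := fun ω l => X l ω
  have hT : Measurable T := measurable_pi_lambda _ hXm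
  have hlam' (l : Fin n) : 0 ≤ lam l := (hlam l).le
  have hlaw (k : Fin n → ℕ) :
      μ.map T {k} = ∏ l, ENNReal.ofReal (exp (-lam l) * lam l ^ k l / (k l).factorial) := by
    rw [hindep.map_apply_singleton hXm]
    simp only [hX]
  have hevent :
      {ω | ∀ i, ∑ j', A i j' * X j' ω = b i} = T ⁻¹' ((Matrix.of A).mulVec ⁻¹' {b}) := by
    ext ω
    exact funext_iff.symm
  have hmean (S : Set (Fin n → ℕ)) : ∫ ω, (X j ω : ℝ) ∂μ[|T ⁻¹' S] =
      ((μ.map T) S).toReal⁻¹ * (lam j * ((μ.map T) ((· + Pi.single j 1) ⁻¹' S)).toReal) := by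
    rw [integral_natCast_cond_preimage μ hT (measurable_pi_apply j) .of_discrete,
      setLIntegral_eval_eq_mul_measure_preimage_add_single _ j _
        (succ_mul_measure_singleton_add_single _ lam hlam' hlaw · j),
      ENNReal.toReal_mul, ENNReal.toReal_ofReal (hlam' j)]
  have hfiber := toReal_measure_mulVec_preimage_eq_mul_F0 _ lam hlam' hlaw A
  have hc : (∏ l, exp (-lam l)) ≠ 0 := Finset.prod_ne_zero_iff.mpr fun l _ => (exp_pos _).ne'
  rw [hevent, hmean]
  refine ⟨fun hle => ?_, fun ⟨i, hi⟩ => ?_⟩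
  · rw [(Matrix.of A).preimage_add_single_mulVec_preimage_of_le hle, hfiber, hfiber]
    field_simp
    rfl
  · rw [(Matrix.of A).preimage_add_single_mulVec_preimage_of_not_le fun h => (h i).not_gt hi]
    simp

/-- Conditional mean formula: for independent Poisson `Xⱼ` and `Y = A·X`,
`E[Xⱼ | Y = b] = λⱼ F₀(b - A_{·j}) / F₀(b)` when all `bᵢ - aᵢⱼ ≥ 0` and `F₀(b) > 0`,
and `E[Xⱼ | Y = b] = 0` when some `bᵢ - aᵢⱼ < 0`. -/
theorem conditional_mean
    {Ω : Type*} [MeasurableSpace Ω] (μ : Measure Ω) [IsProbabilityMeasure μ]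
    {m n : ℕ} (A : Fin m → Fin n → ℕ) (lam : Fin n → ℝ) (hlam : ∀ j, 0 < lam j)
    (X : Fin n → Ω → ℕ) (hXm : ∀ j, Measurable (X j))
    (hindep : iIndepFun X μ)
    (hX : ∀ j k, μ (X j ⁻¹' {k}) =
      ENNReal.ofReal (Real.exp (-lam j) * lam j ^ k / Nat.factorial k))
    (b : Fin m → ℕ) (j : Fin n)
    (hpos : 0 < μ {ω | ∀ i, ∑ j', A i j' * X j' ω = b i})
    (hF0 : 0 < F0 A lam b) :
    ((∀ i, A i j ≤ b i) →
      ∫ ω, ((X j ω : ℝ)) ∂(μ[|{ω | ∀ i, ∑ j', A i j' * X j' ω = b i}]) =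
        lam j * F0 A lam (fun i => b i - A i j) / F0 A lam b) ∧
    ((∃ i, b i < A i j) →
      ∫ ω, ((X j ω : ℝ)) ∂(μ[|{ω | ∀ i, ∑ j', A i j' * X j' ω = b i}]) = 0) :=
  conditional_mean_general μ A lam hlam X hXm hindep hX b j
end
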